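/- arXiv:math/0410312 — 7 statements merged into one kernel-verified Lean document; each statement's English description precedes it below -/
import Mathlib

section
/- Let X be a compact geodesic metric space with basepoint x₀, let μ be a Borel measure on X with 0 < μ(X) < ∞, and let s > 0 be a real number such that (i) every loop in X of length strictly less than s is null-homotopic rel its basepoint, and (ii) μ(closedBall(x,r)) ≥ 2r² for every x ∈ X and every real r with 0 < r ≤ s/2. Then for all real numbers α, β > 0 with 4α + β < 1/2 and every real T > 0, the set of elements of the fundamental group π₁(X, x₀) that admit a representative loop based at x₀ of length at most T is finite, and its cardinality is at most (μ(X)/(2α²s²))^⌊T/(βs)⌋, where ⌊·⌋ denotes the integer part. -/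
open Metric MeasureTheory

attribute [local instance] Path.Homotopic.setoid

/-- The length of a continuous path in a metric space: its total variation. -/
noncomputable def pathLength {X : Type*} [PseudoEMetricSpace X] {x y : X} (γ : Path x y) :
    ENNReal :=
  eVariationOn γ Set.univ

/-- A metric space is geodesic if any two points are joined by a path of length
equal to the distance between them. -/
def IsGeodesicSpace (X : Type*) [MetricSpace X] : Prop :=
  ∀ x y : X, ∃ γ : Path x y, pathLength γ = ENNReal.ofReal (dist x y)

/-- An element of the fundamental group, constructed from a homotopy class of loops. -/
noncomputable def FundamentalGroup.fromLoop {X : Type*} [TopologicalSpace X] {x : X}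
    (p : Path.Homotopic.Quotient x x) : FundamentalGroup X x :=
  FundamentalGroup.fromPath (X := TopCat.of X) p

/-!
Let `A` be a maximal `2αs`-separated set. The balls of radius `αs` about its points are disjoint,
so `|A| ≤ μ(X) / (2α²s²)`. Cut a loop of length at most `T` into `k + 1` arcs of length at most
`βs`, where `k = ⌊T / (βs)⌋`, and replace each of the `k` interior division points by a point of
`A` within distance `2αs`. An arc, closed up by the geodesics from its endpoints to their
replacements and the geodesic between the replacements, is a loop of length at most
`2βs + 8αs < s`, hence null-homotopic. So the loop is homotopic to the geodesic polygon through
`k` points of `A`, and there are at most `|A| ^ k` such polygons.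
-/

open Set unitInterval
open scoped ENNReal NNReal

lemma unitInterval.Icc_zero_one : Icc (0 : I) 1 = univ :=
  eq_univ_of_forall fun _ => ⟨nonneg', le_one'⟩

section PathLength

variable {X : Type*} [PseudoEMetricSpace X] {x y z : X}

@[simp]
lemma pathLength_cast (γ : Path x y) {x' y' : X} (hx : x' = x) (hy : y' = y) :
    pathLength (γ.cast hx hy) = pathLength γ := rfl

@[simp]
lemma pathLength_refl (x : X) : pathLength (Path.refl x) = 0 :=
  eVariationOn.constant_on (by simp)

lemma edist_le_pathLength (γ : Path x y) : edist x y ≤ pathLength γ := by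
  simpa [pathLength] using eVariationOn.edist_le γ (mem_univ 0) (mem_univ 1)

lemma pathLength_symm (γ : Path x y) : pathLength γ.symm = pathLength γ := by
  change eVariationOn (γ ∘ σ) univ = eVariationOn γ univ
  rw [eVariationOn.comp_eq_of_antitoneOn _ _ (fun _ _ _ _ h => symm_le_symm.2 h),
    image_univ_of_surjective symm_bijective.surjective]

lemma eVariationOn_extend_le (γ : Path x y) (s : Set ℝ) :
    eVariationOn γ.extend s ≤ pathLength γ :=
  eVariationOn.comp_le_of_monotoneOn (f := γ) _ ((monotone_projIcc _).monotoneOn _)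
    (mapsTo_univ _ _)

lemma pathLength_trans_le (γ : Path x y) (γ' : Path y z) :
    pathLength (γ.trans γ') ≤ pathLength γ + pathLength γ' := by
  set h : I := ⟨1 / 2, by norm_num, by norm_num⟩
  have htrans (t : I) : (γ.trans γ') t =
      if (t : ℝ) ≤ 1 / 2 then γ.extend (2 * t) else γ'.extend (2 * t - 1) := rfl
  have hleft : EqOn (γ.trans γ') (γ.extend ∘ fun t : I => 2 * (t : ℝ)) (Icc 0 h) :=
    fun t ht => by rw [htrans, if_pos (show (t : ℝ) ≤ 1 / 2 from ht.2)]; rfl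
  have hright : EqOn (γ.trans γ') (γ'.extend ∘ fun t : I => 2 * (t : ℝ) - 1) (Icc h 1) := by
    intro t ht
    rw [htrans]
    split_ifs with h2
    · have : (t : ℝ) = 1 / 2 := le_antisymm h2 ht.1
      simp [this]
    · rfl
  have hmono (c : ℝ) : Monotone fun t : I => 2 * (t : ℝ) - c := fun a b hab => by
    have : (a : ℝ) ≤ b := hab
    linarith
  calc pathLength (γ.trans γ')
      = eVariationOn (γ.trans γ') (Icc 0 h) + eVariationOn (γ.trans γ') (Icc h 1) := by
        have := eVariationOn.Icc_add_Icc (γ.trans γ') (s := univ) (nonneg' (t := h))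
          (le_one' (t := h)) (mem_univ h)
        rw [univ_inter, univ_inter, univ_inter] at this
        rw [pathLength, this, Icc_zero_one]
    _ ≤ eVariationOn γ.extend univ + eVariationOn γ'.extend univ := by
        rw [eVariationOn.eq_of_eqOn hleft, eVariationOn.eq_of_eqOn hright]
        gcongr
        · simpa using eVariationOn.comp_le_of_monotoneOn γ.extend _
            ((hmono 0).monotoneOn _) (mapsTo_univ _ _)
        · exact eVariationOn.comp_le_of_monotoneOn γ'.extend _
            ((hmono 1).monotoneOn _) (mapsTo_univ _ _)
    _ ≤ pathLength γ + pathLength γ' :=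
        add_le_add (eVariationOn_extend_le _ _) (eVariationOn_extend_le _ _)

end PathLength

section Subdivision

variable {α E : Type*} [LinearOrder α] [PseudoMetricSpace E] {f : α → E}

lemma BoundedVariationOn.continuous_variationOnFromTo [TopologicalSpace α] [OrderTopology α]
    (hf : BoundedVariationOn f univ) (hcont : Continuous f) (a : α) :
    Continuous (variationOnFromTo f univ a) := by
  refine continuous_iff_continuousAt.2 fun b => continuousAt_iff_continuous_left_right.2
    ⟨?_, hf.continuousWithinAt_variationOnFromTo_Ici hcont.continuousWithinAt⟩
  have := variationOnFromTo.tendsto_left (mem_univ a) (mem_univ b) hf.locallyBoundedVariationOn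
    (hcont.continuousWithinAt (s := univ ∩ Iio b) (x := b)).tendsto
  rw [dist_self, sub_zero, univ_inter] at this
  exact continuousWithinAt_Iio_iff_Iic.1 this

lemma BoundedVariationOn.eVariationOn_uIcc (hf : BoundedVariationOn f univ) (a b : α) :
    eVariationOn f (uIcc a b) = ENNReal.ofReal |variationOnFromTo f univ a b| := by
  have hfin (s : Set α) : eVariationOn f s ≠ ⊤ :=
    ne_top_of_le_ne_top hf (eVariationOn.mono f (subset_univ s))
  rcases le_total a b with hab | hba
  · rw [uIcc_of_le hab, variationOnFromTo.eq_of_le _ _ hab, univ_inter,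
      abs_of_nonneg ENNReal.toReal_nonneg, ENNReal.ofReal_toReal (hfin _)]
  · rw [uIcc_of_ge hba, variationOnFromTo.eq_of_ge _ _ hba, univ_inter, abs_neg,
      abs_of_nonneg ENNReal.toReal_nonneg, ENNReal.ofReal_toReal (hfin _)]

end Subdivision

lemma Path.pathLength_subpath_le {X : Type*} [PseudoEMetricSpace X] {x y : X} (γ : Path x y)
    (a b : I) : pathLength (γ.subpath a b) ≤ eVariationOn γ (uIcc a b) := by
  wlog hab : a ≤ b generalizing a b
  · rw [← Path.symm_subpath, pathLength_symm, uIcc_comm]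
    exact this b a (le_of_not_ge hab)
  have hmono : Monotone (Icc.convexComb a b) := fun u v huv => by
    have : (u : ℝ) ≤ v := huv
    change (1 - (u : ℝ)) * a + u * b ≤ (1 - (v : ℝ)) * a + v * b
    nlinarith [show (a : ℝ) ≤ b from hab]
  rw [uIcc_of_le hab]
  exact eVariationOn.comp_le_of_monotoneOn γ _ (hmono.monotoneOn _)
    fun t _ => ⟨Icc.le_convexComb hab t, Icc.convexComb_le hab t⟩

theorem Path.exists_subdivision_pathLength_le {X : Type*} [PseudoMetricSpace X] {x y : X}
    (γ : Path x y) (hγ : pathLength γ ≠ ⊤) {n : ℕ} (hn : n ≠ 0) :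
    ∃ t : Fin (n + 1) → I, t 0 = 0 ∧ t (Fin.last n) = 1 ∧
      ∀ k : Fin n, pathLength (γ.subpath (t k.castSucc) (t k.succ)) ≤ pathLength γ / n := by
  have hbv : BoundedVariationOn γ univ := hγ
  set L := (pathLength γ).toReal
  set w := variationOnFromTo γ univ 0
  have hw0 : w 0 = 0 := variationOnFromTo.self _ _ _
  have hw1 : w 1 = L := by
    change variationOnFromTo γ univ 0 1 = L
    rw [variationOnFromTo.eq_of_le _ _ le_one', univ_inter, Icc_zero_one]; rfl
  have hivt (k : Fin (n + 1)) : ∃ u, w u = k * (L / n) := by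
    refine intermediate_value_univ 0 1 (hbv.continuous_variationOnFromTo γ.continuous 0) ?_
    change _ ∈ Icc (w 0) (w 1)
    rw [hw0, hw1]
    refine ⟨by positivity, ?_⟩
    calc (k : ℝ) * (L / n) ≤ n * (L / n) := by gcongr; exact_mod_cast k.is_le
      _ = L := by field_simp
  choose u hu using hivt
  set t : Fin (n + 1) → I := fun k => if k = 0 then 0 else if k = Fin.last n then 1 else u k
  have hwt (k : Fin (n + 1)) : w (t k) = k * (L / n) := by
    simp only [t]
    split_ifs with h0 h1
    · simp [h0, hw0]
    · rw [h1, hw1, Fin.val_last]; field_simp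
    · exact hu k
  refine ⟨t, if_pos rfl, by simp [t, hn], fun k => ?_⟩
  calc pathLength (γ.subpath (t k.castSucc) (t k.succ))
      ≤ eVariationOn γ (uIcc (t k.castSucc) (t k.succ)) := γ.pathLength_subpath_le _ _
    _ = ENNReal.ofReal (L / n) := by
      rw [hbv.eVariationOn_uIcc, ← variationOnFromTo.sub_right hbv.locallyBoundedVariationOn
        (mem_univ 0) (mem_univ _) (mem_univ _)]
      change ENNReal.ofReal |w _ - w _| = _
      rw [hwt, hwt, Fin.val_succ, Fin.val_castSucc]
      push_cast
      rw [← sub_mul, add_sub_cancel_left, one_mul, abs_of_nonneg (by positivity)]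
    _ = pathLength γ / n := by
      rw [ENNReal.ofReal_div_of_pos (by positivity), ENNReal.ofReal_toReal hγ,
        ENNReal.ofReal_natCast]

namespace Path.Homotopic

variable {X : Type*}

theorem of_pathLength_add_lt [PseudoEMetricSpace X] {ℓ : ℝ≥0∞}
    (hsys : ∀ (x : X) (γ : Path x x), pathLength γ < ℓ → γ.Homotopic (Path.refl x))
    {a b : X} {p q : Path a b} (h : pathLength p + pathLength q < ℓ) : p.Homotopic q := by
  have hloop := hsys a (p.trans q.symm)
    ((pathLength_trans_le _ _).trans_lt (by rwa [pathLength_symm]))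
  rw [← Quotient.eq] at hloop ⊢
  calc Quotient.mk p = (Quotient.mk (p.trans q.symm)).trans (Quotient.mk q) := by simp
    _ = Quotient.mk q := by rw [hloop]; simp

variable [TopologicalSpace X]

theorem concat_trans {n : ℕ} {z m : Fin (n + 1) → X}
    {F : ∀ k : Fin n, Path (z k.castSucc) (z k.succ)}
    {G : ∀ k : Fin n, Path (m k.castSucc) (m k.succ)} (c : ∀ i, Path (z i) (m i))
    (h : ∀ k, ((F k).trans (c k.succ)).Homotopic ((c k.castSucc).trans (G k))) :
    ((concat z F).trans (c (Fin.last n))).Homotopic ((c 0).trans (concat m G)) := by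
  induction n with
  | zero =>
    rw [concat_zero, concat_zero]
    exact (refl_trans _).trans (trans_refl _).symm
  | succ n ih =>
    rw [concat_succ, concat_succ]
    exact ((trans_assoc _ _ _).trans ((refl _).hcomp (h (Fin.last n)))).trans <|
      (trans_assoc _ _ _).symm.trans <|
        ((ih (fun i => c i.castSucc) fun k => h k.castSucc).hcomp (refl _)).trans
          (trans_assoc _ _ _)

theorem of_trans_homotopic_trans {a b a' b' : X} {p : Path a b} {q : Path a' b'}
    {c : Path a a'} {d : Path b b'}
    (ha : a = a') (hb : b = b') (hc : c.Homotopic ((Path.refl a).cast rfl ha.symm))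
    (hd : d.Homotopic ((Path.refl b).cast rfl hb.symm))
    (h : (p.trans d).Homotopic (c.trans q)) :
    p.Homotopic (q.cast ha hb) := by
  subst ha hb
  exact (trans_refl p).symm.trans <| ((refl p).hcomp hd.symm).trans <| h.trans <|
    (hc.hcomp (refl q)).trans (refl_trans q)

end Path.Homotopic

section Packing

variable {X : Type*} [PseudoMetricSpace X] {ρ : ℝ≥0} {C : Set X}

lemma Metric.IsSeparated.pairwiseDisjoint_closedBall (hC : IsSeparated (2 * ρ : ℝ≥0) C) :
    C.PairwiseDisjoint fun x => closedBall x ρ := fun a _ b _ hab =>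
  closedBall_disjoint_closedBall <| by
    have hlt : ((2 * ρ : ℝ≥0) : ℝ≥0∞) < edist a b := hC ‹_› ‹_› hab
    rw [edist_nndist, ENNReal.coe_lt_coe, ← NNReal.coe_lt_coe, coe_nndist] at hlt
    push_cast at hlt
    linarith

variable [MeasurableSpace X] [OpensMeasurableSpace X] {μ : Measure X} {m : ℝ≥0∞}

lemma Metric.IsSeparated.finite_of_le_measure_closedBall (hμ : μ univ ≠ ⊤) (hm : 0 < m)
    (hball : ∀ x ∈ C, m ≤ μ (closedBall x ρ)) (hC : IsSeparated (2 * ρ : ℝ≥0) C) :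
    C.Finite := by
  have := Measure.finite_const_le_meas_of_disjoint_iUnion μ hm
    (As := fun x : C => closedBall (x : X) ρ) (fun _ => measurableSet_closedBall)
    (fun a b hab => hC.pairwiseDisjoint_closedBall a.2 b.2 (Subtype.coe_ne_coe.2 hab))
    (ne_top_of_le_ne_top hμ (measure_mono (subset_univ _)))
  have huniv : {x : C | m ≤ μ (closedBall x ρ)} = univ :=
    eq_univ_of_forall fun x => hball x x.2
  rw [huniv] at this
  exact Set.finite_coe_iff.1 (Set.finite_univ_iff.1 this)

lemma Metric.IsSeparated.ncard_mul_le_measure_univ (hball : ∀ x ∈ C, m ≤ μ (closedBall x ρ))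
    (hC : IsSeparated (2 * ρ : ℝ≥0) C) (hfin : C.Finite) : C.ncard * m ≤ μ univ := by
  classical
  calc (C.ncard : ℝ≥0∞) * m = ∑ _x ∈ hfin.toFinset, m := by
        rw [Finset.sum_const, nsmul_eq_mul, Set.ncard_eq_toFinset_card C hfin]
    _ ≤ ∑ x ∈ hfin.toFinset, μ (closedBall x ρ) :=
        Finset.sum_le_sum fun x hx => hball x (hfin.mem_toFinset.1 hx)
    _ = μ (⋃ x ∈ hfin.toFinset, closedBall x ρ) :=
        (measure_biUnion_finset (by simpa using hC.pairwiseDisjoint_closedBall)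
          fun _ _ => measurableSet_closedBall).symm
    _ ≤ μ univ := measure_mono (subset_univ _)

theorem exists_finite_cover_ncard_mul_le_measure_univ (hμ : μ univ ≠ ⊤) (hm : 0 < m)
    (hball : ∀ x, m ≤ μ (closedBall x ρ)) :
    ∃ A : Set X, A.Finite ∧ (∀ x, ∃ a ∈ A, dist x a ≤ 2 * ρ) ∧ A.ncard * m ≤ μ univ := by
  have hsep (C : Set X) (hC : IsSeparated (2 * ρ : ℝ≥0) C) :
      C.Finite ∧ C.ncard * m ≤ μ univ :=
    have hfin := hC.finite_of_le_measure_closedBall hμ hm fun x _ => hball x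
    ⟨hfin, hC.ncard_mul_le_measure_univ (fun x _ => hball x) hfin⟩
  have hpack : packingNumber (2 * ρ) (univ : Set X) ≠ ⊤ := by
    refine ne_top_of_le_ne_top (ENat.natCast_ne_top ⌊(μ univ / m).toReal⌋₊) ?_
    refine iSup₂_le fun C _ => iSup_le fun hC => ?_
    obtain ⟨hfin, hcard⟩ := hsep C hC
    rw [← hfin.cast_ncard_eq, Nat.cast_le, Nat.le_floor_iff ENNReal.toReal_nonneg]
    have := (ENNReal.le_div_iff_mul_le (Or.inl hm.ne') (Or.inr hμ)).2 hcard
    simpa using ENNReal.toReal_mono (ENNReal.div_ne_top hμ hm.ne') this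
  set A := maximalSeparatedSet (2 * ρ) (univ : Set X)
  obtain ⟨hfin, hcard⟩ := hsep A isSeparated_maximalSeparatedSet
  refine ⟨A, hfin, fun x => ?_, hcard⟩
  obtain ⟨a, ha, hxa⟩ := isCover_maximalSeparatedSet hpack (mem_univ x)
  refine ⟨a, ha, ?_⟩
  change edist x a ≤ (2 * ρ : ℝ≥0) at hxa
  rw [edist_nndist, ENNReal.coe_le_coe, ← NNReal.coe_le_coe, coe_nndist] at hxa
  exact_mod_cast hxa

end Packing

section Polygon

variable {X : Type*} [TopologicalSpace X]

noncomputable def polygon (E : ∀ a b : X, Path a b) {n : ℕ} (m : Fin (n + 1) → X) :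
    Path (m 0) (m (Fin.last n)) :=
  Path.concat m fun k => E (m k.castSucc) (m k.succ)

/-- The geodesic polygon through `x₀, v 0, …, v (k - 1), x₀`. -/
noncomputable def polygonLoop (E : ∀ a b : X, Path a b) (x₀ : X) {k : ℕ} (v : Fin k → X) :
    Path x₀ x₀ :=
  (polygon E (Fin.cons x₀ (Fin.snoc v x₀) : Fin (k + 2) → X)).cast (by simp) (by simp)

end Polygon

section Approximation

variable {X : Type*} [PseudoMetricSpace X] {s : ℝ} {E : ∀ a b : X, Path a b}

lemma trans_geodesic_homotopic_geodesic_trans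
    (hsys : ∀ (x : X) (γ : Path x x), pathLength γ < ENNReal.ofReal s →
      γ.Homotopic (Path.refl x))
    (hE : ∀ a b, pathLength (E a b) = ENNReal.ofReal (dist a b))
    {ε δ : ℝ} (hε : 0 ≤ ε) (hεδ : 2 * ε + 4 * δ < s)
    {a b a' b' : X} (p : Path a b) (hp : pathLength p ≤ ENNReal.ofReal ε)
    (ha : dist a a' ≤ δ) (hb : dist b b' ≤ δ) :
    (p.trans (E b b')).Homotopic ((E a a').trans (E a' b')) := by
  have hδ : 0 ≤ δ := dist_nonneg.trans ha
  have hab : dist a b ≤ ε := by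
    rw [← edist_le_ofReal hε]
    exact (edist_le_pathLength p).trans hp
  have ha'b' : dist a' b' ≤ δ + ε + δ := by
    linarith [dist_triangle4 a' a b b', dist_comm a a']
  refine Path.Homotopic.of_pathLength_add_lt hsys ?_
  calc pathLength (p.trans (E b b')) + pathLength ((E a a').trans (E a' b'))
      ≤ (ENNReal.ofReal ε + ENNReal.ofReal δ) +
          (ENNReal.ofReal δ + ENNReal.ofReal (δ + ε + δ)) := by
        gcongr
        · exact (pathLength_trans_le _ _).trans (add_le_add hp (by rw [hE]; gcongr))
        · exact (pathLength_trans_le _ _).trans (by rw [hE, hE]; gcongr)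
    _ = ENNReal.ofReal (2 * ε + 4 * δ) := by
        rw [← ENNReal.ofReal_add, ← ENNReal.ofReal_add, ← ENNReal.ofReal_add] <;> first
          | positivity | ring_nf
    _ < ENNReal.ofReal s := by
        rw [ENNReal.ofReal_lt_ofReal_iff (by linarith)]
        exact hεδ

theorem exists_homotopic_polygonLoop
    (hsys : ∀ (x : X) (γ : Path x x), pathLength γ < ENNReal.ofReal s →
      γ.Homotopic (Path.refl x))
    (hE : ∀ a b, pathLength (E a b) = ENNReal.ofReal (dist a b))
    {ε δ : ℝ} (hε : 0 ≤ ε) (hεδ : 2 * ε + 4 * δ < s)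
    {A : Set X} (hA : ∀ x, ∃ a ∈ A, dist x a ≤ δ) {x₀ : X} (γ : Path x₀ x₀)
    {k : ℕ} (hγ : pathLength γ ≤ (k + 1) * ENNReal.ofReal ε) :
    ∃ v : Fin k → X, (∀ i, v i ∈ A) ∧ γ.Homotopic (polygonLoop E x₀ v) := by
  have hδ : 0 ≤ δ := by obtain ⟨a, -, ha⟩ := hA x₀; exact dist_nonneg.trans ha
  choose net hnetA hnet using hA
  obtain ⟨t, ht0, ht1, hpiece⟩ := γ.exists_subdivision_pathLength_le
    (ne_top_of_le_ne_top (by finiteness) hγ) k.succ_ne_zero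
  set v : Fin k → X := fun j => net (γ (t j.castSucc.succ))
  set m : Fin (k + 2) → X := Fin.cons x₀ (Fin.snoc v x₀)
  have hm (i : Fin (k + 2)) : dist (γ (t i)) (m i) ≤ δ := by
    induction i using Fin.cases with
    | zero => simpa [m, ht0] using hδ
    | succ i =>
      induction i using Fin.lastCases with
      | last => simpa [m, Fin.succ_last, ht1] using hδ
      | cast j => simpa [m, v] using hnet _
  have hlen (j : Fin (k + 1)) :
      pathLength (γ.subpath (t j.castSucc) (t j.succ)) ≤ ENNReal.ofReal ε :=
    (hpiece j).trans (ENNReal.div_le_of_le_mul' (by exact_mod_cast hγ))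
  have hladder := Path.Homotopic.concat_trans (z := fun i => γ (t i)) (m := m)
    (c := fun i => E (γ (t i)) (m i))
    fun j => trans_geodesic_homotopic_geodesic_trans hsys hE hε hεδ _ (hlen j) (hm _) (hm _)
  have hs : 0 < s := by linarith
  have hnull (i) (h : γ (t i) = m i) :
      (E (γ (t i)) (m i)).Homotopic ((Path.refl _).cast rfl h.symm) :=
    Path.Homotopic.of_pathLength_add_lt hsys (by simpa [hE, h] using hs)
  have h0 : γ (t 0) = m 0 := by simp [m, ht0]
  have h1 : γ (t (Fin.last _)) = m (Fin.last _) := by simp [m, ht1]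
  have hsubpath := Path.Homotopic.of_trans_homotopic_trans h0 h1 (hnull 0 h0) (hnull _ h1)
    (((Path.Homotopic.concat_subpath γ t).symm.hcomp (.refl _)).trans hladder)
  have hγ : γ = (γ.subpath (t 0) (t (Fin.last _))).cast (by simp [ht0]) (by simp [ht1]) := by
    ext; simp [Path.subpath, ht0, ht1]
  refine ⟨v, fun j => hnetA _, ?_⟩
  rw [hγ]
  exact hsubpath.pathCast _ _

def loopClassesWithLengthLE (x₀ : X) (ℓ : ℝ≥0∞) : Set (FundamentalGroup X x₀) :=
  {g | ∃ γ : Path x₀ x₀, FundamentalGroup.fromLoop ⟦γ⟧ = g ∧ pathLength γ ≤ ℓ}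

theorem loopClassesWithLengthLE_subset_range
    (hsys : ∀ (x : X) (γ : Path x x), pathLength γ < ENNReal.ofReal s →
      γ.Homotopic (Path.refl x))
    (hE : ∀ a b, pathLength (E a b) = ENNReal.ofReal (dist a b))
    {ε δ : ℝ} (hε : 0 ≤ ε) (hεδ : 2 * ε + 4 * δ < s)
    {A : Set X} (hA : ∀ x, ∃ a ∈ A, dist x a ≤ δ) (x₀ : X) {k : ℕ} {ℓ : ℝ≥0∞}
    (hℓ : ℓ ≤ (k + 1) * ENNReal.ofReal ε) :
    loopClassesWithLengthLE x₀ ℓ ⊆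
      range fun v : Fin k → A => FundamentalGroup.fromLoop ⟦polygonLoop E x₀ (v ·)⟧ := by
  rintro _ ⟨γ, rfl, hγ⟩
  obtain ⟨v, hvA, hv⟩ := exists_homotopic_polygonLoop hsys hE hε hεδ hA γ (hγ.trans hℓ)
  exact ⟨fun i => ⟨v i, hvA i⟩, congrArg _ (Quotient.sound hv.symm)⟩

end Approximation

lemma ENNReal.ofReal_le_floor_div_add_one_mul {T c : ℝ} (hc : 0 < c) :
    ENNReal.ofReal T ≤ (⌊T / c⌋₊ + 1) * ENNReal.ofReal c := by
  rw [← ENNReal.ofReal_natCast, ← ENNReal.ofReal_one,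
    ← ENNReal.ofReal_add (Nat.cast_nonneg _) zero_le_one, ← ENNReal.ofReal_mul (by positivity)]
  exact ENNReal.ofReal_le_ofReal ((div_le_iff₀ hc).1 (Nat.lt_floor_add_one _).le)

lemma Set.ncard_le_card_of_subset_range {α β : Type*} [Finite α] {f : α → β} {S : Set β}
    (h : S ⊆ range f) : S.ncard ≤ Nat.card α :=
  (ncard_le_ncard h (finite_range f)).trans (Finite.card_range_le f)

theorem entropy_counting_estimate_extremal_surface_general
    {X : Type*} [MetricSpace X]
    [MeasurableSpace X] [BorelSpace X]
    (hgeo : IsGeodesicSpace X) (x₀ : X) (μ : Measure X)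
    (hμfin : μ Set.univ < ⊤)
    (s : ℝ) (hs : 0 < s)
    (hsys : ∀ (x : X) (γ : Path x x), pathLength γ < ENNReal.ofReal s →
      γ.Homotopic (Path.refl x))
    (hball : ∀ (x : X) (r : ℝ), 0 < r → r ≤ s / 2 →
      ENNReal.ofReal (2 * r ^ 2) ≤ μ (closedBall x r))
    (α β : ℝ) (hα : 0 < α) (hβ : 0 < β) (hαβ : 4 * α + β < 1 / 2)
    (T : ℝ) :
    {g : FundamentalGroup X x₀ | ∃ γ : Path x₀ x₀,
        FundamentalGroup.fromLoop ⟦γ⟧ = g ∧ pathLength γ ≤ ENNReal.ofReal T}.Finite ∧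
    ({g : FundamentalGroup X x₀ | ∃ γ : Path x₀ x₀,
        FundamentalGroup.fromLoop ⟦γ⟧ = g ∧ pathLength γ ≤ ENNReal.ofReal T}.ncard : ℝ) ≤
      ((μ Set.univ).toReal / (2 * α ^ 2 * s ^ 2)) ^ ⌊T / (β * s)⌋₊ := by
  choose E hE using hgeo
  have hρ : (((α * s).toNNReal : ℝ≥0) : ℝ) = α * s := Real.coe_toNNReal _ (by positivity)
  obtain ⟨A, hAfin, hAcov, hAcard⟩ := exists_finite_cover_ncard_mul_le_measure_univ hμfin.ne
    (ρ := (α * s).toNNReal) (m := ENNReal.ofReal (2 * (α * s) ^ 2)) (by positivity)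
    fun x => by rw [hρ]; exact hball x (α * s) (by positivity) (by nlinarith)
  have := hAfin.to_subtype
  have hsub := loopClassesWithLengthLE_subset_range hsys hE (ε := β * s) (δ := 2 * (α * s))
    (ℓ := ENNReal.ofReal T) (by positivity) (by nlinarith)
    (fun x => hρ ▸ hAcov x) x₀ (ENNReal.ofReal_le_floor_div_add_one_mul (by positivity))
  refine ⟨(finite_range _).subset hsub, ?_⟩
  have hA : (A.ncard : ℝ) ≤ (μ univ).toReal / (2 * α ^ 2 * s ^ 2) := by
    have := ENNReal.toReal_mono hμfin.ne hAcard
    rw [ENNReal.toReal_mul, ENNReal.toReal_natCast, ENNReal.toReal_ofReal (by positivity)] at this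
    rw [le_div_iff₀ (by positivity)]
    linarith
  calc _ ≤ ((Nat.card (Fin ⌊T / (β * s)⌋₊ → A) : ℕ) : ℝ) :=
        Nat.cast_le.2 (ncard_le_card_of_subset_range hsub)
    _ ≤ _ := by
        rw [Nat.card_fun, Nat.card_fin, Nat.card_coe_set_eq]
        push_cast
        gcongr

theorem entropy_counting_estimate_extremal_surface
    {X : Type*} [MetricSpace X] [CompactSpace X]
    [MeasurableSpace X] [BorelSpace X]
    (hgeo : IsGeodesicSpace X) (x₀ : X) (μ : Measure X)
    (hμpos : 0 < μ Set.univ) (hμfin : μ Set.univ < ⊤)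
    (s : ℝ) (hs : 0 < s)
    (hsys : ∀ (x : X) (γ : Path x x), pathLength γ < ENNReal.ofReal s →
      γ.Homotopic (Path.refl x))
    (hball : ∀ (x : X) (r : ℝ), 0 < r → r ≤ s / 2 →
      ENNReal.ofReal (2 * r ^ 2) ≤ μ (closedBall x r))
    (α β : ℝ) (hα : 0 < α) (hβ : 0 < β) (hαβ : 4 * α + β < 1 / 2)
    (T : ℝ) (hT : 0 < T) :
    {g : FundamentalGroup X x₀ | ∃ γ : Path x₀ x₀,
        FundamentalGroup.fromLoop ⟦γ⟧ = g ∧ pathLength γ ≤ ENNReal.ofReal T}.Finite ∧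
    ({g : FundamentalGroup X x₀ | ∃ γ : Path x₀ x₀,
        FundamentalGroup.fromLoop ⟦γ⟧ = g ∧ pathLength γ ≤ ENNReal.ofReal T}.ncard : ℝ) ≤
      ((μ Set.univ).toReal / (2 * α ^ 2 * s ^ 2)) ^ ⌊T / (β * s)⌋₊ :=
  entropy_counting_estimate_extremal_surface_general hgeo x₀ μ hμfin s hs hsys hball α β hα hβ hαβ T
end

section
/- Let G be a countable group acting by isometries on a metric space X, preserving a Borel measure μ on X. Let x₀ ∈ X, let D > 0, and let Δ ⊆ X be a measurable set with x₀ ∈ Δ and Δ ⊆ closedBall(x₀, D), such that the translates γ•Δ (γ ∈ G) cover X up to a μ-null set. If, for a real number R > 0, the set F = {γ ∈ G : dist(γ•x₀, x₀) ≤ R + D} is finite, then μ(ball(x₀, R)) ≤ (card F) · μ(Δ). -/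
open Metric MeasureTheory Pointwise

theorem orbit_counting_upper_bound
    {G : Type*} [Group G] [Countable G]
    {X : Type*} [MetricSpace X] [MeasurableSpace X] [BorelSpace X]
    [MulAction G X]
    (μ : Measure X)
    (hiso : ∀ γ : G, Isometry fun x : X => γ • x)
    (hpres : ∀ (γ : G) (A : Set X), MeasurableSet A → μ (γ • A) = μ A)
    (x₀ : X) (D : ℝ) (hD : 0 < D)
    (Δ : Set X) (hΔmeas : MeasurableSet Δ) (hx₀ : x₀ ∈ Δ)
    (hΔD : Δ ⊆ closedBall x₀ D)
    (hcover : μ (Set.univ \ ⋃ γ : G, γ • Δ) = 0)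
    (R : ℝ) (hR : 0 < R)
    (hF : {γ : G | dist (γ • x₀) x₀ ≤ R + D}.Finite) :
    μ (ball x₀ R) ≤ ({γ : G | dist (γ • x₀) x₀ ≤ R + D}.ncard : ENNReal) * μ Δ := by
  set U : Set X := ⋃ γ : G, γ • Δ with hU
  have key : ball x₀ R ∩ U ⊆ ⋃ γ ∈ hF.toFinset, γ • Δ := by
    rintro x ⟨hx, hxU⟩
    obtain ⟨γ, hγ⟩ := Set.mem_iUnion.1 hxU
    refine Set.mem_biUnion (hF.mem_toFinset.2 ?_) hγ
    show dist (γ • x₀) x₀ ≤ R + D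
    obtain ⟨d, hd, rfl⟩ := hγ
    have h1 : dist (γ • d) (γ • x₀) = dist d x₀ := (hiso γ).dist_eq d x₀
    have h2 : dist d x₀ ≤ D := mem_closedBall.1 (hΔD hd)
    calc dist (γ • x₀) x₀ ≤ dist (γ • x₀) (γ • d) + dist (γ • d) x₀ := dist_triangle _ _ _
      _ ≤ D + R := by
          rw [dist_comm (γ • x₀) (γ • d), h1]
          exact add_le_add (h2.trans_eq' rfl) (mem_ball.1 hx).le
      _ = R + D := add_comm _ _
  calc μ (ball x₀ R) ≤ μ (ball x₀ R ∩ U) + μ (ball x₀ R \ U) :=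
        measure_le_inter_add_diff μ _ _
    _ ≤ μ (⋃ γ ∈ hF.toFinset, γ • Δ) + μ (Set.univ \ U) := by
        refine add_le_add (measure_mono key) (measure_mono ?_)
        exact Set.diff_subset_diff_left (Set.subset_univ _)
    _ = μ (⋃ γ ∈ hF.toFinset, γ • Δ) := by rw [hcover, add_zero]
    _ ≤ ∑ γ ∈ hF.toFinset, μ (γ • Δ) := measure_biUnion_finset_le _ _
    _ = ∑ γ ∈ hF.toFinset, μ Δ := by
        refine Finset.sum_congr rfl fun γ _ => hpres γ Δ hΔmeas
    _ = (hF.toFinset.card : ENNReal) * μ Δ := by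
        rw [Finset.sum_const, nsmul_eq_mul]
    _ = _ := by rw [Set.ncard_eq_toFinset_card _ hF]
end

section
/- Let G be a countable group acting by isometries on a metric space X, preserving a Borel measure μ on X. Let x₀ ∈ X, let D > 0, and let Δ ⊆ X be a measurable set with x₀ ∈ Δ and Δ ⊆ closedBall(x₀, D), such that the translates γ•Δ (γ ∈ G) cover X up to a μ-null set and μ((γ•Δ) ∩ (γ'•Δ)) = 0 for all γ ≠ γ' in G. Assume 0 < μ(Δ) < ∞, that μ(ball(x₀, R)) < ∞ for every R > 0, and that the set N(R) = {γ ∈ G : dist(γ•x₀, x₀) < R} is finite for every R > 0. Then limsup_{R → ∞} (log μ(ball(x₀, R)))/R = limsup_{R → ∞} (log (card N(R)))/R. -/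
open Metric MeasureTheory Pointwise Filter
open scoped ENNReal

private lemma key_aux (u v : ℝ → ℝ) (c D : ℝ)
    (h : ∀ᶠ R in atTop, u R ≤ v (R + D) + c) :
    ∀ a : ℝ, (∀ᶠ R in atTop, v R / R ≤ a) →
      ∀ ε : ℝ, 0 < ε → ∀ᶠ R in atTop, u R / R ≤ a + ε := by
  intro a ha ε hε
  have hv' : ∀ᶠ R in atTop, v R ≤ a * R := by
    filter_upwards [ha, eventually_gt_atTop 0] with R hR hR0
    have : v R / R * R ≤ a * R := by nlinarith
    rwa [div_mul_cancel₀ _ hR0.ne'] at this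
  have h1 : ∀ᶠ R in atTop, v (R + D) ≤ a * (R + D) :=
    (tendsto_atTop_add_const_right atTop D tendsto_id).eventually hv'
  have h2 : Tendsto (fun R : ℝ => (a * D + c) / R) atTop (nhds 0) :=
    tendsto_const_nhds.div_atTop tendsto_id
  have h3 : ∀ᶠ R in atTop, (a * D + c) / R ≤ ε :=
    h2.eventually_le_const hε
  filter_upwards [h, h1, h3, eventually_gt_atTop 0] with R hR h1R h3R hR0
  have hle : u R ≤ a * R + (a * D + c) := by linarith
  calc u R / R ≤ (a * R + (a * D + c)) / R :=
        div_le_div_of_nonneg_right hle hR0.le |>.trans_eq rfl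
    _ = a + (a * D + c) / R := by field_simp
    _ ≤ a + ε := by linarith

private lemma limsup_div_eq_aux (u v : ℝ → ℝ) (c c' D D' : ℝ)
    (huv : ∀ᶠ R in atTop, u R ≤ v (R + D) + c)
    (hvu : ∀ᶠ R in atTop, v R ≤ u (R + D') + c')
    (hub : ∃ m, ∀ᶠ R in atTop, m ≤ u R / R)
    (hvb : ∃ m, ∀ᶠ R in atTop, m ≤ v R / R) :
    limsup (fun R => u R / R) atTop = limsup (fun R => v R / R) atTop := by
  have hlu : limsup (fun R => u R / R) atTop = sInf {a : ℝ | ∀ᶠ R in atTop, u R / R ≤ a} :=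
    limsup_eq
  have hlv : limsup (fun R => v R / R) atTop = sInf {a : ℝ | ∀ᶠ R in atTop, v R / R ≤ a} :=
    limsup_eq
  obtain ⟨mu, hmu⟩ := hub
  obtain ⟨mv, hmv⟩ := hvb
  have hbu : BddBelow {a : ℝ | ∀ᶠ R in atTop, u R / R ≤ a} := by
    refine ⟨mu, fun a ha => ?_⟩
    obtain ⟨R, h1, h2⟩ := (hmu.and ha).exists
    exact h1.trans h2
  have hbv : BddBelow {a : ℝ | ∀ᶠ R in atTop, v R / R ≤ a} := by
    refine ⟨mv, fun a ha => ?_⟩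
    obtain ⟨R, h1, h2⟩ := (hmv.and ha).exists
    exact h1.trans h2
  have kuv := key_aux u v c D huv
  have kvu := key_aux v u c' D' hvu
  rcases Set.eq_empty_or_nonempty {a : ℝ | ∀ᶠ R in atTop, v R / R ≤ a} with hSv | hSv
  · rcases Set.eq_empty_or_nonempty {a : ℝ | ∀ᶠ R in atTop, u R / R ≤ a} with hSu | hSu
    · rw [hlu, hlv, hSu, hSv]
    · exfalso
      obtain ⟨a, ha⟩ := hSu
      have h : (a + 1) ∈ {a : ℝ | ∀ᶠ R in atTop, v R / R ≤ a} := kvu a ha 1 one_pos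
      rw [hSv] at h
      exact h
  · have hSu : {a : ℝ | ∀ᶠ R in atTop, u R / R ≤ a}.Nonempty := by
      obtain ⟨a, ha⟩ := hSv
      exact ⟨a + 1, kuv a ha 1 one_pos⟩
    rw [hlu, hlv]
    apply le_antisymm
    · refine le_csInf hSv fun a ha => ?_
      exact le_of_forall_pos_le_add fun ε hε => csInf_le hbu (kuv a ha ε hε)
    · refine le_csInf hSu fun a ha => ?_
      exact le_of_forall_pos_le_add fun ε hε => csInf_le hbv (kvu a ha ε hε)

theorem volume_entropy_eq_critical_exponent
    {G : Type*} [Group G] [Countable G]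
    {X : Type*} [MetricSpace X] [MeasurableSpace X] [BorelSpace X]
    [MulAction G X]
    (μ : Measure X)
    (hiso : ∀ γ : G, Isometry fun x : X => γ • x)
    (hpres : ∀ (γ : G) (A : Set X), MeasurableSet A → μ (γ • A) = μ A)
    (x₀ : X) (D : ℝ) (hD : 0 < D)
    (Δ : Set X) (hΔmeas : MeasurableSet Δ) (hx₀ : x₀ ∈ Δ)
    (hΔD : Δ ⊆ closedBall x₀ D)
    (hcover : μ (Set.univ \ ⋃ γ : G, γ • Δ) = 0)
    (hdisj : ∀ γ γ' : G, γ ≠ γ' → μ ((γ • Δ) ∩ (γ' • Δ)) = 0)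
    (hΔpos : 0 < μ Δ) (hΔfin : μ Δ < ⊤)
    (hballfin : ∀ R : ℝ, 0 < R → μ (ball x₀ R) < ⊤)
    (hNfin : ∀ R : ℝ, 0 < R → {γ : G | dist (γ • x₀) x₀ < R}.Finite) :
    limsup (fun R : ℝ => Real.log (μ (ball x₀ R)).toReal / R) atTop =
      limsup (fun R : ℝ =>
        Real.log ({γ : G | dist (γ • x₀) x₀ < R}.ncard : ℝ) / R) atTop := by
  have hmeas : ∀ γ : G, MeasurableSet (γ • Δ) := by
    intro γ
    have h : γ • Δ = (fun x : X => γ⁻¹ • x) ⁻¹' Δ := by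
      ext x; simp [Set.mem_smul_set_iff_inv_smul_mem]
    rw [h]
    exact hΔmeas.preimage (hiso γ⁻¹).continuous.measurable
  have hμγ : ∀ γ : G, μ (γ • Δ) = μ Δ := fun γ => hpres γ Δ hΔmeas
  have hdistbd : ∀ (γ : G) (y : X), y ∈ γ • Δ → dist y (γ • x₀) ≤ D := by
    intro γ y hy
    obtain ⟨z, hz, rfl⟩ := hy
    have h := (hiso γ).dist_eq z x₀
    have hzD : dist z x₀ ≤ D := mem_closedBall.mp (hΔD hz)
    simpa [h] using hzD
  have lemA : ∀ R : ℝ, 0 < R →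
      μ Δ * ({γ : G | dist (γ • x₀) x₀ < R}.ncard : ℝ≥0∞) ≤ μ (ball x₀ (R + D)) := by
    intro R hR
    set s := (hNfin R hR).toFinset with hs
    have hsub : (⋃ γ ∈ s, γ • Δ) ⊆ ball x₀ (R + D) := by
      intro y hy
      simp only [Set.mem_iUnion] at hy
      obtain ⟨γ, hγ, hyγ⟩ := hy
      have hγ' : dist (γ • x₀) x₀ < R := (hNfin R hR).mem_toFinset.mp hγ
      have h1 : dist y (γ • x₀) ≤ D := hdistbd γ y hyγ
      have h2 : dist y x₀ < R + D :=
        (dist_triangle y (γ • x₀) x₀).trans_lt (by linarith)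
      exact mem_ball.mpr h2
    have heq : μ (⋃ γ ∈ s, γ • Δ) = ∑ γ ∈ s, μ (γ • Δ) := by
      apply measure_biUnion_finset₀
      · intro γ _ γ' _ hne
        exact hdisj γ γ' hne
      · exact fun γ _ => (hmeas γ).nullMeasurableSet
    have hcard : ({γ : G | dist (γ • x₀) x₀ < R}.ncard : ℝ≥0∞) = (s.card : ℝ≥0∞) := by
      rw [Set.ncard_eq_toFinset_card _ (hNfin R hR)]
    calc μ Δ * ({γ : G | dist (γ • x₀) x₀ < R}.ncard : ℝ≥0∞)
        = (s.card : ℝ≥0∞) * μ Δ := by rw [hcard]; ring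
      _ = ∑ γ ∈ s, μ (γ • Δ) := by
          simp [hμγ, Finset.sum_const, nsmul_eq_mul]
      _ = μ (⋃ γ ∈ s, γ • Δ) := heq.symm
      _ ≤ μ (ball x₀ (R + D)) := measure_mono hsub
  have lemB : ∀ R : ℝ, 0 < R →
      μ (ball x₀ R) ≤ μ Δ * ({γ : G | dist (γ • x₀) x₀ < R + D}.ncard : ℝ≥0∞) := by
    intro R hR
    have hRD : (0:ℝ) < R + D := by linarith
    set s := (hNfin (R + D) hRD).toFinset with hs
    have hsub : ball x₀ R ⊆ (Set.univ \ ⋃ γ : G, γ • Δ) ∪ ⋃ γ ∈ s, γ • Δ := by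
      intro y hy
      by_cases hy2 : y ∈ ⋃ γ : G, γ • Δ
      · right
        simp only [Set.mem_iUnion] at hy2 ⊢
        obtain ⟨γ, hyγ⟩ := hy2
        refine ⟨γ, ?_, hyγ⟩
        apply (hNfin (R + D) hRD).mem_toFinset.mpr
        have h1 : dist y (γ • x₀) ≤ D := hdistbd γ y hyγ
        have h2 : dist y x₀ < R := mem_ball.mp hy
        have h3 : dist (γ • x₀) x₀ < R + D := by
          calc dist (γ • x₀) x₀ ≤ dist (γ • x₀) y + dist y x₀ := dist_triangle _ _ _
            _ = dist y (γ • x₀) + dist y x₀ := by rw [dist_comm]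
            _ < R + D := by linarith
        exact h3
      · exact Or.inl ⟨trivial, hy2⟩
    calc μ (ball x₀ R) ≤ μ ((Set.univ \ ⋃ γ : G, γ • Δ) ∪ ⋃ γ ∈ s, γ • Δ) := measure_mono hsub
      _ ≤ μ (Set.univ \ ⋃ γ : G, γ • Δ) + μ (⋃ γ ∈ s, γ • Δ) := measure_union_le _ _
      _ = μ (⋃ γ ∈ s, γ • Δ) := by rw [hcover, zero_add]
      _ ≤ ∑ γ ∈ s, μ (γ • Δ) := measure_biUnion_finset_le _ _
      _ = (s.card : ℝ≥0∞) * μ Δ := by simp [hμγ, Finset.sum_const, nsmul_eq_mul]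
      _ = μ Δ * ({γ : G | dist (γ • x₀) x₀ < R + D}.ncard : ℝ≥0∞) := by
          rw [Set.ncard_eq_toFinset_card _ (hNfin (R + D) hRD)]; ring
  -- pass to real numbers
  set c : ℝ := (μ Δ).toReal with hc
  have hc0 : 0 < c := ENNReal.toReal_pos hΔpos.ne' hΔfin.ne
  set f : ℝ → ℝ := fun R => (μ (ball x₀ R)).toReal with hf
  set g : ℝ → ℝ := fun R => ({γ : G | dist (γ • x₀) x₀ < R}.ncard : ℝ) with hg
  have g1 : ∀ R : ℝ, 0 < R → 1 ≤ g R := by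
    intro R hR
    have h1 : (1:G) ∈ {γ : G | dist (γ • x₀) x₀ < R} := by
      simp only [Set.mem_setOf_eq, one_smul, dist_self]; exact hR
    have h2 : 0 < {γ : G | dist (γ • x₀) x₀ < R}.ncard :=
      (Set.ncard_pos (hNfin R hR)).mpr ⟨1, h1⟩
    have h3 : 1 ≤ {γ : G | dist (γ • x₀) x₀ < R}.ncard := h2
    show (1:ℝ) ≤ ({γ : G | dist (γ • x₀) x₀ < R}.ncard : ℝ)
    exact_mod_cast h3
  have RA : ∀ R : ℝ, 0 < R → c * g R ≤ f (R + D) := by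
    intro R hR
    have hRD : (0:ℝ) < R + D := by linarith
    have h := ENNReal.toReal_mono (hballfin (R + D) hRD).ne (lemA R hR)
    rwa [ENNReal.toReal_mul, ENNReal.toReal_natCast] at h
  have RB : ∀ R : ℝ, 0 < R → f R ≤ c * g (R + D) := by
    intro R hR
    have hne : μ Δ * ({γ : G | dist (γ • x₀) x₀ < R + D}.ncard : ℝ≥0∞) ≠ ⊤ :=
      ENNReal.mul_ne_top hΔfin.ne (ENNReal.natCast_ne_top _)
    have h := ENNReal.toReal_mono hne (lemB R hR)
    rwa [ENNReal.toReal_mul, ENNReal.toReal_natCast] at h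
  have fc : ∀ R : ℝ, D < R → c ≤ f R := by
    intro R hRD
    have hR0 : (0:ℝ) < R := hD.trans hRD
    have h : μ Δ ≤ μ (ball x₀ R) :=
      measure_mono (hΔD.trans (closedBall_subset_ball hRD))
    exact ENNReal.toReal_mono (hballfin R hR0).ne h
  -- the eventual log inequalities
  have huv : ∀ᶠ R in atTop, Real.log (f R) ≤ Real.log (g (R + D)) + Real.log c := by
    filter_upwards [eventually_gt_atTop D] with R hRD
    have hR0 : (0:ℝ) < R := hD.trans hRD
    have hfR : 0 < f R := hc0.trans_le (fc R hRD)
    have hgpos : 0 < g (R + D) := lt_of_lt_of_le one_pos (g1 (R + D) (by linarith))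
    have h := Real.log_le_log hfR (RB R hR0)
    rw [Real.log_mul hc0.ne' hgpos.ne'] at h
    linarith
  have hvu : ∀ᶠ R in atTop, Real.log (g R) ≤ Real.log (f (R + D)) + (-Real.log c) := by
    filter_upwards [eventually_gt_atTop 0] with R hR0
    have hgpos : 0 < g R := lt_of_lt_of_le one_pos (g1 R hR0)
    have h := Real.log_le_log (by positivity : 0 < c * g R) (RA R hR0)
    rw [Real.log_mul hc0.ne' hgpos.ne'] at h
    linarith
  have hub : ∃ m, ∀ᶠ R in atTop, m ≤ Real.log (f R) / R := by
    refine ⟨-|Real.log c|, ?_⟩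
    filter_upwards [eventually_ge_atTop 1, eventually_gt_atTop D] with R hR1 hRD
    have hR0 : (0:ℝ) < R := by linarith
    have h1 : Real.log c ≤ Real.log (f R) := Real.log_le_log hc0 (fc R hRD)
    have h2 : -|Real.log c| * R ≤ Real.log (f R) := by
      have ha : (0:ℝ) ≤ |Real.log c| := abs_nonneg _
      calc -|Real.log c| * R ≤ -|Real.log c| := by nlinarith
        _ ≤ Real.log c := neg_abs_le _
        _ ≤ Real.log (f R) := h1
    exact (le_div_iff₀ hR0).mpr h2
  have hvb : ∃ m, ∀ᶠ R in atTop, m ≤ Real.log (g R) / R := by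
    refine ⟨0, ?_⟩
    filter_upwards [eventually_gt_atTop 0] with R hR0
    have h1 : 0 ≤ Real.log (g R) := Real.log_nonneg (g1 R hR0)
    positivity
  exact limsup_div_eq_aux (fun R => Real.log (f R)) (fun R => Real.log (g R))
    (Real.log c) (-Real.log c) D D huv hvu hub hvb
end

section
/- For all real numbers λ, λ₊ with 0 < λ < λ₊, there exists a real number g₀ such that for every real g ≥ g₀ and every real σ with 0 < σ ≤ 4/3: if (log σ)² / σ ≥ λ₊ · g, then σ ≤ (log g)² / (λ · g). -/
/-!
If `σ` exceeded `log² g / (λ g)`, the hypothesis would give `log² σ ≥ λ₊ g σ > log² g`. Since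
`σ ≤ 4/3` forces `log σ ≤ 1/3`, this can only happen for `log σ < -log g`, i.e. `σ < 1 / g`;
but `log² g / (λ g) ≥ 1 / g` as soon as `log² g ≥ λ`.
-/

open Real

lemma lt_neg_of_sq_lt_sq_of_le {x L : ℝ} (hxL : x ≤ L) (h : L ^ 2 < x ^ 2) : x < -L := by
  nlinarith

theorem asymptotic_inversion (lam lam' : ℝ) (hlam : 0 < lam) (hlt : lam < lam') :
    ∃ g₀ : ℝ, ∀ g : ℝ, g₀ ≤ g → ∀ σ : ℝ, 0 < σ → σ ≤ 4 / 3 →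
      lam' * g ≤ (Real.log σ) ^ 2 / σ → σ ≤ (Real.log g) ^ 2 / (lam * g) := by
  refine ⟨exp (1 + lam), fun g hg σ hσ hσ_le hmain => ?_⟩
  have hg_pos : 0 < g := (exp_pos _).trans_le hg
  have hL : 1 + lam ≤ log g := (le_log_iff_exp_le hg_pos).2 hg
  have hlam_le : lam ≤ log g ^ 2 := by nlinarith
  by_contra! hσ_big
  have hsq : log g ^ 2 < log σ ^ 2 := calc
    log g ^ 2 = lam * g * (log g ^ 2 / (lam * g)) := by field_simp
    _ < lam * g * σ := by gcongr
    _ ≤ lam' * g * σ := by gcongr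
    _ ≤ log σ ^ 2 := (le_div_iff₀ hσ).1 hmain
  have hlog : log σ < -log g :=
    lt_neg_of_sq_lt_sq_of_le (by linarith [log_le_sub_one_of_pos hσ]) hsq
  have hσ_small : σ < g⁻¹ := by
    rw [← exp_log hσ, ← exp_log (inv_pos.2 hg_pos), log_inv]
    exact exp_lt_exp.2 hlog
  have hinv_le : g⁻¹ ≤ log g ^ 2 / (lam * g) := by
    calc g⁻¹ = lam / (lam * g) := by field_simp
      _ ≤ log g ^ 2 / (lam * g) := by gcongr
  linarith
end

section
/- For every real number λ with 0 < λ < π there exists a real number g₀ such that the following holds: for every real g ≥ g₀ and every real σ with 0 < σ ≤ 4/3, if for all real α, β > 0 with 4α + β < 1/2 one has (log(2α²σ))² / σ ≥ 4πβ²(g − 1), then σ ≤ (log g)² / (λ · g). -/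
/-!
Fix admissible `α, β` with `λ < 4πβ² < π` and put `a = 2α²`, so that `aσ < 1` for `σ ≤ 4/3`.
The claim is trivial when `λgσ ≤ 1 ≤ log² g`; otherwise `1/σ ≤ λg`, hence
`0 < -log(aσ) ≤ log g + log(λ/a)`, and the hypothesis gives `4πβ²(g - 1)σ ≤ (log g + log(λ/a))²`. Since `4πβ² > λ`, for large `g` the right-hand side is at most
`4πβ²(g - 1) · log² g / (λg)`, which is the claim.
-/

open Real Filter

lemma exists_pos_lt_half_lt_four_pi_mul_sq {lam : ℝ} (hlt : lam < π) :
    ∃ β : ℝ, 0 < β ∧ β < 1 / 2 ∧ lam < 4 * π * β ^ 2 := by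
  obtain ⟨t, hlam_t, htπ⟩ := exists_between (max_lt hlt pi_pos)
  have ht : 0 < t := (le_max_right lam 0).trans_lt hlam_t
  have hsq : sqrt (t / (4 * π)) ^ 2 = t / (4 * π) := sq_sqrt (by positivity)
  refine ⟨sqrt (t / (4 * π)), sqrt_pos.mpr (by positivity), ?_, ?_⟩
  · rw [sqrt_lt' (by norm_num), div_lt_iff₀ (by positivity)]
    linarith
  · rw [hsq, mul_div_cancel₀ _ (by positivity)]
    exact (le_max_left lam 0).trans_lt hlam_t

lemma eventually_mul_le_mul_sub_one {ν μ : ℝ} (h : ν < μ) :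
    ∀ᶠ g : ℝ in atTop, ν * g ≤ μ * (g - 1) := by
  filter_upwards [eventually_ge_atTop (μ / (μ - ν))] with g hg
  rw [div_le_iff₀ (sub_pos.mpr h)] at hg
  linarith

lemma eventually_mul_add_sq_le_mul_sq {lam ν : ℝ} (hlam : 0 ≤ lam) (h : lam < ν) (C : ℝ) :
    ∀ᶠ x : ℝ in atTop, lam * (x + C) ^ 2 ≤ ν * x ^ 2 := by
  filter_upwards [eventually_ge_atTop 1,
    eventually_ge_atTop (lam * (2 * |C| + C ^ 2) / (ν - lam))] with x hx1 hx
  rw [div_le_iff₀ (sub_pos.mpr h)] at hx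
  have hC : 2 * C * x + C ^ 2 ≤ (2 * |C| + C ^ 2) * x := by
    nlinarith [le_abs_self C, abs_nonneg C, sq_nonneg C]
  nlinarith [mul_le_mul_of_nonneg_left hC hlam]

lemma eventually_mul_mul_log_add_sq_le {lam μ : ℝ} (hlam : 0 ≤ lam) (h : lam < μ) (C : ℝ) :
    ∀ᶠ g : ℝ in atTop, lam * g * (log g + C) ^ 2 ≤ μ * (g - 1) * log g ^ 2 := by
  obtain ⟨ν, hlam_ν, hν_μ⟩ := exists_between h
  filter_upwards [eventually_mul_le_mul_sub_one hν_μ,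
    tendsto_log_atTop.eventually (eventually_mul_add_sq_le_mul_sq hlam hlam_ν C),
    eventually_ge_atTop 0] with g hgrowth hlog hg
  calc lam * g * (log g + C) ^ 2 = g * (lam * (log g + C) ^ 2) := by ring
    _ ≤ g * (ν * log g ^ 2) := mul_le_mul_of_nonneg_left hlog hg
    _ = ν * g * log g ^ 2 := by ring
    _ ≤ μ * (g - 1) * log g ^ 2 := mul_le_mul_of_nonneg_right hgrowth (sq_nonneg _)

lemma sq_log_mul_le_sq_log_add_log {a σ lam g : ℝ} (ha : 0 < a) (hσ : 0 < σ) (haσ : a * σ < 1)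
    (hg : 0 < g) (h : 1 ≤ lam * g * σ) :
    log (a * σ) ^ 2 ≤ (log g + log (lam / a)) ^ 2 := by
  have hlam : 0 < lam :=
    pos_of_mul_pos_left (pos_of_mul_pos_left (one_pos.trans_le h) hσ.le) hg.le
  have hneg : log (a * σ) < 0 := log_neg (by positivity) haσ
  have hinv : (a * σ)⁻¹ ≤ g * (lam / a) := by
    rw [inv_le_iff_one_le_mul₀ (by positivity)]
    calc 1 ≤ lam * g * σ := h
      _ = g * (lam / a) * (a * σ) := by field_simp
  have hbound : -log (a * σ) ≤ log g + log (lam / a) := by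
    rw [← log_inv, ← log_mul hg.ne' (by positivity)]
    exact log_le_log (by positivity) hinv
  exact sq_le_sq' (by linarith) (by linarith)

theorem asymptotic_systolic_ratio_bound (lam : ℝ) (hlam : 0 < lam) (hlt : lam < π) :
    ∃ g₀ : ℝ, ∀ g : ℝ, g₀ ≤ g → ∀ σ : ℝ, 0 < σ → σ ≤ 4 / 3 →
      (∀ α β : ℝ, 0 < α → 0 < β → 4 * α + β < 1 / 2 →
        4 * π * β ^ 2 * (g - 1) ≤ (Real.log (2 * α ^ 2 * σ)) ^ 2 / σ) →
      σ ≤ (Real.log g) ^ 2 / (lam * g) := by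
  obtain ⟨β, hβ, hβ_half, hlam_β⟩ := exists_pos_lt_half_lt_four_pi_mul_sq hlt
  obtain ⟨α, hα, hαβ, hα_small⟩ : ∃ α : ℝ, 0 < α ∧ 4 * α + β < 1 / 2 ∧ α < 1 / 8 :=
    ⟨(1 / 2 - β) / 8, by linarith, by linarith, by linarith⟩
  obtain ⟨g₀, hg₀⟩ := eventually_atTop.mp
    ((eventually_mul_mul_log_add_sq_le hlam.le hlam_β (log (lam / (2 * α ^ 2)))).and
      ((tendsto_log_atTop.eventually_ge_atTop 1).and (eventually_gt_atTop 1)))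
  refine ⟨g₀, fun g hg_ge σ hσ hσ_le hyp => ?_⟩
  obtain ⟨hgrowth, hlog, hg⟩ := hg₀ g hg_ge
  rw [le_div_iff₀ (by positivity)]
  rcases le_total (lam * g * σ) 1 with hsmall | hlarge
  · nlinarith
  have haσ : 2 * α ^ 2 * σ < 1 := by nlinarith
  have hmain : 4 * π * β ^ 2 * (g - 1) * σ ≤ (log g + log (lam / (2 * α ^ 2))) ^ 2 :=
    ((le_div_iff₀ hσ).mp (hyp α β hα hβ hαβ)).trans
      (sq_log_mul_le_sq_log_add_log (by positivity) hσ haσ (by linarith) hlarge)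
  refine le_of_mul_le_mul_left ?_ (by positivity : 0 < 4 * π * β ^ 2 * (g - 1))
  nlinarith [mul_le_mul_of_nonneg_left hmain (by positivity : 0 ≤ lam * g)]
end

section
/- Let g be a natural number and let σ be a real number with 2/√3 < σ ≤ 4/3. If for every real α with 0 < α ≤ 1/8 one has (log(2α²σ))² / σ ≥ 4π(1/2 − 4α)²(g − 1), then g ≤ 19. -/
open Real

theorem loewner_genus_bound (g : ℕ) (σ : ℝ) (hσl : 2 / Real.sqrt 3 < σ) (hσu : σ ≤ 4 / 3)
    (h : ∀ α : ℝ, 0 < α → α ≤ 1 / 8 →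
      4 * π * (1 / 2 - 4 * α) ^ 2 * ((g : ℝ) - 1) ≤ (Real.log (2 * α ^ 2 * σ)) ^ 2 / σ) :
    g ≤ 19 := by
  by_contra hg
  push_neg at hg
  have hg20 : (20 : ℝ) ≤ (g : ℝ) := by exact_mod_cast hg
  -- bound on sqrt 3
  have hs3 : Real.sqrt 3 < 1.7320509 := by
    rw [Real.sqrt_lt' (by norm_num)]
    norm_num
  have hs3pos : (0:ℝ) < Real.sqrt 3 := Real.sqrt_pos.mpr (by norm_num)
  have hσlo : 2 / 1.7320509 < σ := by
    have : (2:ℝ) / 1.7320509 < 2 / Real.sqrt 3 := by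
      apply div_lt_div_of_pos_left (by norm_num) hs3pos hs3
    linarith
  have hσpos : (0:ℝ) < σ := by nlinarith
  -- specialize
  have H := h (31/1000) (by norm_num) (by norm_num)
  have hxval : 2 * ((31:ℝ)/1000) ^ 2 * σ = 961/500000 * σ := by ring
  rw [hxval] at H
  set x : ℝ := 961/500000 * σ with hxdef
  have hxpos : 0 < x := by positivity
  -- exp bound
  have e1 : (2.7182818283:ℝ) < Real.exp 1 := Real.exp_one_gt_d9
  have e1pos : (0:ℝ) < Real.exp 1 := Real.exp_pos 1
  have h6 : Real.exp 6 = (Real.exp 1) ^ 6 := by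
    rw [← Real.exp_nat_mul]; norm_num
  have hsplit : Real.exp (31/5) = Real.exp 6 * Real.exp (1/5) := by
    rw [← Real.exp_add]; norm_num
  have he5 : (6:ℝ)/5 ≤ Real.exp (1/5) := by
    have := Real.add_one_le_exp (1/5 : ℝ)
    linarith
  have hexp_lb : (484:ℝ) ≤ Real.exp (31/5) := by
    rw [hsplit, h6]
    have h1 : (2.7182818283:ℝ) ^ 6 ≤ (Real.exp 1) ^ 6 := by
      apply pow_le_pow_left₀ (by norm_num) (le_of_lt e1)
    have h2 : (484:ℝ) ≤ 2.7182818283 ^ 6 * (6/5) := by norm_num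
    nlinarith [Real.exp_pos (1/5 : ℝ)]
  have hexp_neg : Real.exp (-(31/5)) ≤ 1/484 := by
    rw [Real.exp_neg]
    rw [inv_le_comm₀ (by positivity) (by norm_num)]
    simpa using hexp_lb
  have hxlb : Real.exp (-(31/5)) ≤ x := by
    have : (1:ℝ)/484 ≤ x := by
      rw [hxdef]; nlinarith
    linarith
  have hlog_lb : -(31/5) ≤ Real.log x := by
    rw [← Real.log_exp (-(31/5))]
    exact Real.log_le_log (Real.exp_pos _) hxlb
  have hxle1 : x ≤ 1 := by rw [hxdef]; nlinarith
  have hlog_ub : Real.log x ≤ 0 := Real.log_nonpos (le_of_lt hxpos) hxle1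
  have hsq : (Real.log x) ^ 2 ≤ (31/5) ^ 2 :=
    sq_le_sq' hlog_lb (by linarith)
  -- RHS bound
  have hrhs : (Real.log x) ^ 2 / σ ≤ (31/5)^2 / σ := by gcongr
  have hrhs2 : ((31:ℝ)/5)^2 / σ ≤ (31/5)^2 / (2/1.7320509) := by
    apply div_le_div_of_nonneg_left (by positivity) (by norm_num) (le_of_lt hσlo)
  -- LHS bound
  have hpi : (3.141592:ℝ) < π := Real.pi_gt_d6
  have hlhs : (33.7:ℝ) ≤ 4 * π * (1 / 2 - 4 * (31/1000)) ^ 2 * ((g : ℝ) - 1) := by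
    nlinarith
  have : ((31:ℝ)/5)^2 / (2/1.7320509) < 33.7 := by norm_num
  linarith
end

section
/- For every integer n ≥ 1 and all real numbers b > 0 and c > 0, there exists a real number λ > 0 such that for all real numbers E and H with E ≥ 2c, H > 0, and H ≤ b · E^{1/n} · log(E/c), one has E ≥ λ · Hⁿ / (log(1 + H))ⁿ. -/
/-!
With `x = E / c` and `B = b c^(1/n)` the hypothesis reads `H ≤ B x^(1/n) log x`. This forces
`H / log (1 + H) ≤ max 2 (n B) · x^(1/n)`, and the `n`-th power of that bound gives the claim
with `λ = c / (max 2 (n B))^n`.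
-/

open Real

lemma div_log_one_add_le {x : ℝ} (hx : 0 < x) : x / log (1 + x) ≤ 1 + x / 2 := by
  have hlog : 2 * x / (x + 2) ≤ log (1 + x) := le_log_one_add_of_nonneg hx.le
  rw [div_le_iff₀ (lt_of_lt_of_le (by positivity) hlog)]
  rw [div_le_iff₀ (by positivity)] at hlog
  nlinarith

/-- Below the threshold `x ^ (1 / n)` the ratio is at most `1 + H / 2`; above it,
`log (1 + H) ≥ log x / n` cancels the logarithm in the hypothesis. -/
lemma div_log_one_add_le_max_mul_rpow {n : ℕ} (hn : n ≠ 0) {B x H : ℝ} (hx : 1 < x)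
    (hH : 0 < H) (hHx : H ≤ B * x ^ ((1 : ℝ) / n) * log x) :
    H / log (1 + H) ≤ max 2 (n * B) * x ^ ((1 : ℝ) / n) := by
  set A := x ^ ((1 : ℝ) / n)
  have hA : 1 ≤ A := one_le_rpow hx.le (by positivity)
  have hL : 0 < log x := log_pos hx
  have hlogA : log A = log x / n := by
    rw [log_rpow (by linarith), one_div_mul_eq_div]
  rcases le_total H A with hHA | hAH
  · calc H / log (1 + H) ≤ 1 + H / 2 := div_log_one_add_le hH
      _ ≤ 2 * A := by linarith
      _ ≤ max 2 (n * B) * A := by gcongr; exact le_max_left _ _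
  · have hn' : (0 : ℝ) < n := by positivity
    have hlogH : log x / n ≤ log (1 + H) := hlogA ▸ log_le_log (by linarith) (by linarith)
    calc H / log (1 + H) ≤ B * A * log x / (log x / n) := by gcongr; linarith
      _ = n * B * A := by field_simp
      _ ≤ max 2 (n * B) * A := by gcongr; exact le_max_right _ _

theorem isoembolic_entropy_inversion_general (n : ℕ) (hn : 1 ≤ n) (b c : ℝ) (hc : 0 < c) :
    ∃ lam : ℝ, 0 < lam ∧ ∀ E H : ℝ, 2 * c ≤ E → 0 < H →
      H ≤ b * E ^ ((1 : ℝ) / n) * Real.log (E / c) →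
      lam * H ^ n / (Real.log (1 + H)) ^ n ≤ E := by
  have hn0 : n ≠ 0 := by omega
  set M := max 2 (n * (b * c ^ ((1 : ℝ) / n)))
  have hM : 0 < M := lt_of_lt_of_le two_pos (le_max_left _ _)
  refine ⟨c / M ^ n, by positivity, fun E H hE hH hHE => ?_⟩
  have hx : 2 ≤ E / c := (le_div_iff₀ hc).mpr (by linarith)
  have hsplit : E ^ ((1 : ℝ) / n) = c ^ ((1 : ℝ) / n) * (E / c) ^ ((1 : ℝ) / n) := by
    rw [← mul_rpow hc.le (by linarith), mul_div_cancel₀ _ hc.ne']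
  rw [hsplit, ← mul_assoc] at hHE
  have hratio : H / log (1 + H) ≤ M * (E / c) ^ ((1 : ℝ) / n) :=
    div_log_one_add_le_max_mul_rpow hn0 (by linarith) hH hHE
  have hpow : (H / log (1 + H)) ^ n ≤ M ^ n * (E / c) := by
    calc (H / log (1 + H)) ^ n ≤ (M * (E / c) ^ ((1 : ℝ) / n)) ^ n :=
          pow_le_pow_left₀ (div_pos hH (log_pos (by linarith))).le hratio n
      _ = M ^ n * (E / c) := by rw [mul_pow, one_div, rpow_inv_natCast_pow (by linarith) hn0]
  calc c / M ^ n * H ^ n / log (1 + H) ^ n = c / M ^ n * (H / log (1 + H)) ^ n := by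
        rw [div_pow, mul_div_assoc]
    _ ≤ c / M ^ n * (M ^ n * (E / c)) := by gcongr
    _ = E := by field_simp

theorem isoembolic_entropy_inversion (n : ℕ) (hn : 1 ≤ n) (b c : ℝ) (hb : 0 < b) (hc : 0 < c) :
    ∃ lam : ℝ, 0 < lam ∧ ∀ E H : ℝ, 2 * c ≤ E → 0 < H →
      H ≤ b * E ^ ((1 : ℝ) / n) * Real.log (E / c) →
      lam * H ^ n / (Real.log (1 + H)) ^ n ≤ E :=
  isoembolic_entropy_inversion_general n hn b c hc
end
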